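/- (Representation theorem for loop-cumulative relations) Assume the compactness assumption on U. A consequence relation ⊦ is loop-cumulative (i.e. cumulative and satisfies Loop) if and only if there exists a cumulative ordered model W such that ⊦ equals ⊦_W. -/
import Mathlib


namespace KLM

/-- Classical propositional formulas over a set `V` of propositional variables. -/
inductive Form (V : Type) : Type
  | var : V → Form V
  | fls : Form V
  | neg : Form V → Form V
  | conj : Form V → Form V → Form V
  | disj : Form V → Form V → Form V
  | impl : Form V → Form V → Form V
  | biim : Form V → Form V → Form V

/-- A world is a truth assignment to the propositional variables. -/
abbrev World (V : Type) := V → Prop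

/-- Satisfaction of a formula by a world (usual classical semantics). -/
def Sat {V : Type} (u : World V) : Form V → Prop
  | Form.var p => u p
  | Form.fls => False
  | Form.neg a => ¬ Sat u a
  | Form.conj a b => Sat u a ∧ Sat u b
  | Form.disj a b => Sat u a ∨ Sat u b
  | Form.impl a b => Sat u a → Sat u b
  | Form.biim a b => Sat u a ↔ Sat u b

variable {V : Type}

/-- `⊨ α` : every world of the universe `U` satisfies `α`. -/
def Valid (U : Set (World V)) (a : Form V) : Prop := ∀ u ∈ U, Sat u a

/-- Reflexivity: α ⊦ α. -/
def Reflexivity (C : Form V → Form V → Prop) : Prop := ∀ a, C a a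

/-- Left Logical Equivalence. -/
def LLE (U : Set (World V)) (C : Form V → Form V → Prop) : Prop :=
  ∀ a b c, Valid U (Form.biim a b) → C a c → C b c

/-- Right Weakening. -/
def RW (U : Set (World V)) (C : Form V → Form V → Prop) : Prop :=
  ∀ a b c, Valid U (Form.impl a b) → C c a → C c b

/-- Cut. -/
def CutRule (C : Form V → Form V → Prop) : Prop :=
  ∀ a b c, C (Form.conj a b) c → C a b → C a c

/-- Cautious Monotonicity. -/
def CautMono (C : Form V → Form V → Prop) : Prop :=
  ∀ a b c, C a b → C a c → C (Form.conj a b) c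

/-- A consequence relation is cumulative iff it satisfies Reflexivity, LLE, RW,
Cut and Cautious Monotonicity. -/
def Cumulative (U : Set (World V)) (C : Form V → Form V → Prop) : Prop :=
  Reflexivity C ∧ LLE U C ∧ RW U C ∧ CutRule C ∧ CautMono C

/-- And rule. -/
def AndRule (C : Form V → Form V → Prop) : Prop :=
  ∀ a b c, C a b → C a c → C a (Form.conj b c)

/-- Or rule. -/
def OrRule (C : Form V → Form V → Prop) : Prop :=
  ∀ a b c, C a c → C b c → C (Form.disj a b) c

/-- A consequence relation is preferential iff it is cumulative and satisfies Or. -/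
def Preferential (U : Set (World V)) (C : Form V → Form V → Prop) : Prop :=
  Cumulative U C ∧ OrRule C

/-- Monotonicity. -/
def Monot (U : Set (World V)) (C : Form V → Form V → Prop) : Prop :=
  ∀ a b c, Valid U (Form.impl a b) → C b c → C a c

/-- EHD : easy half of the deduction theorem. -/
def EHD (C : Form V → Form V → Prop) : Prop :=
  ∀ a b c, C a (Form.impl b c) → C (Form.conj a b) c

/-- Transitivity. -/
def TransRule (C : Form V → Form V → Prop) : Prop :=
  ∀ a b c, C a b → C b c → C a c

/-- Contraposition. -/
def Contraposition (C : Form V → Form V → Prop) : Prop :=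
  ∀ a b, C a b → C (Form.neg b) (Form.neg a)

/-- The rule S: from α ∧ β ⊦ γ infer α ⊦ β → γ. -/
def SRule (C : Form V → Form V → Prop) : Prop :=
  ∀ a b c, C (Form.conj a b) c → C a (Form.impl b c)

/-- MPC : modus ponens in the consequent. -/
def MPC (C : Form V → Form V → Prop) : Prop :=
  ∀ a b c, C a (Form.impl b c) → C a b → C a c

/-- Equivalence rule. -/
def EquivRule (C : Form V → Form V → Prop) : Prop :=
  ∀ a b c, C a b → C b a → C a c → C b c

/-- Loop rule. -/
def LoopRule (C : Form V → Form V → Prop) : Prop :=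
  ∀ k : ℕ, 1 ≤ k → ∀ al : ℕ → Form V,
    (∀ i < k, C (al i) (al (i + 1))) → C (al k) (al 0) → C (al 0) (al k)

/-- A world `m ∈ U` is normal for `α` iff it satisfies every plausible consequence of `α`. -/
def NormalFor (U : Set (World V)) (C : Form V → Form V → Prop)
    (a : Form V) (m : World V) : Prop :=
  m ∈ U ∧ ∀ b, C a b → Sat m b

/-- Compactness assumption on the universe `U`: a set of formulas all of whose finite
subsets are satisfiable (in `U`) is satisfiable (in `U`). -/
def Compactness (U : Set (World V)) : Prop :=
  ∀ G : Set (Form V),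
    (∀ F : Finset (Form V), ↑F ⊆ G → ∃ u ∈ U, ∀ a ∈ F, Sat u a) →
    ∃ u ∈ U, ∀ a ∈ G, Sat u a

/-- `t` is minimal in `A` (w.r.t. `prec`) iff `t ∈ A` and no element of `A` is below `t`. -/
def MinimalIn {S : Type} (prec : S → S → Prop) (A : Set S) (t : S) : Prop :=
  t ∈ A ∧ ∀ s ∈ A, ¬ prec s t

/-- `A` is smooth iff every element of `A` is minimal in `A` or has a minimal
element of `A` below it. -/
def Smooth {S : Type} (prec : S → S → Prop) (A : Set S) : Prop :=
  ∀ t ∈ A, MinimalIn prec A t ∨ ∃ s, prec s t ∧ MinimalIn prec A s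

/-- A cumulative model: states labeled by nonempty sets of worlds of `U`, with a
binary preference relation satisfying the smoothness condition. -/
structure CumulModel (V : Type) (U : Set (World V)) where
  S : Type
  l : S → Set (World V)
  l_sub : ∀ s, l s ⊆ U
  l_ne : ∀ s, (l s).Nonempty
  prec : S → S → Prop
  smooth : ∀ a : Form V, Smooth prec {s : S | ∀ u ∈ l s, Sat u a}

/-- A state satisfies `α` iff every world in its label does. -/
def CumulModel.StateSat {V : Type} {U : Set (World V)} (W : CumulModel V U)
    (s : W.S) (a : Form V) : Prop :=
  ∀ u ∈ W.l s, Sat u a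

/-- The consequence relation defined by a cumulative model: `α ⊦_W β` iff every state
minimal in `α̂` satisfies `β`. -/
def CumulModel.Cons {V : Type} {U : Set (World V)} (W : CumulModel V U)
    (a b : Form V) : Prop :=
  ∀ s : W.S, MinimalIn W.prec {t : W.S | W.StateSat t a} s → W.StateSat s b

/-- A preferential model: states labeled by single worlds of `U`, with a strict
partial order satisfying the smoothness condition. -/
structure PrefModel (V : Type) (U : Set (World V)) where
  S : Type
  l : S → World V
  l_mem : ∀ s, l s ∈ U
  prec : S → S → Prop
  irrefl : ∀ s, ¬ prec s s
  trans : ∀ s t r, prec s t → prec t r → prec s r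
  smooth : ∀ a : Form V, Smooth prec {s : S | Sat (l s) a}

/-- The consequence relation defined by a preferential model. -/
def PrefModel.Cons {V : Type} {U : Set (World V)} (W : PrefModel V U)
    (a b : Form V) : Prop :=
  ∀ s : W.S, MinimalIn W.prec {t : W.S | Sat (W.l t) a} s → Sat (W.l s) b

section Aux

variable {U : Set (World V)} {C : Form V → Form V → Prop}

lemma aux_validImpl {a b : Form V} (h : ∀ u, Sat u a → Sat u b) :
    Valid U (Form.impl a b) := fun u _ => h u

lemma aux_validBiim {a b : Form V} (h : ∀ u, Sat u a ↔ Sat u b) :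
    Valid U (Form.biim a b) := fun u _ => h u

lemma aux_and (hC : Cumulative U C) : AndRule C := by
  obtain ⟨hR, _hL, hW, hCut, hCM⟩ := hC
  intro a b c hab hac
  have hv : Valid U (Form.impl (Form.conj (Form.conj a b) c) (Form.conj b c)) := by
    intro u _
    simp only [Sat]
    tauto
  have h1 : C (Form.conj (Form.conj a b) c) (Form.conj b c) :=
    hW _ _ _ hv (hR _)
  have h2 : C (Form.conj a b) c := hCM a b c hab hac
  have h3 : C (Form.conj a b) (Form.conj b c) := hCut _ _ _ h1 h2
  exact hCut a b _ h3 hab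

lemma aux_equiv (hC : Cumulative U C) : EquivRule C := by
  obtain ⟨_hR, hL, _hW, hCut, hCM⟩ := hC
  intro a b c hab hba hac
  have h1 : C (Form.conj a b) c := hCM a b c hab hac
  have hv : Valid U (Form.biim (Form.conj a b) (Form.conj b a)) := by
    intro u _
    simp only [Sat]
    tauto
  have h2 : C (Form.conj b a) c := hL _ _ _ hv h1
  exact hCut b a c h2 hba

/-- Conjunction of a list of formulas. -/
def conjAll : List (Form V) → Form V
  | [] => Form.neg Form.fls
  | x :: L => Form.conj x (conjAll L)

lemma sat_conjAll {u : World V} {L : List (Form V)} :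
    Sat u (conjAll L) ↔ ∀ x ∈ L, Sat u x := by
  induction L with
  | nil => simp [conjAll, Sat]
  | cons x L ih => simp [conjAll, Sat, ih]

lemma C_conjAll (hC : Cumulative U C) {a : Form V} {L : List (Form V)}
    (h : ∀ x ∈ L, C a x) : C a (conjAll L) := by
  induction L with
  | nil =>
      exact hC.2.2.1 a (conjAll []) a
        (fun u _ => by simp [conjAll, Sat]) (hC.1 a)
  | cons x L ih =>
      exact aux_and hC a x (conjAll L) (h x (by simp))
        (ih fun y hy => h y (List.mem_cons_of_mem _ hy))

/-- Key lemma: under compactness, `C a b` holds iff every world normal for `a`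
satisfies `b`. -/
lemma normal_char (hcomp : Compactness U) (hC : Cumulative U C) (a b : Form V) :
    C a b ↔ ∀ m, NormalFor U C a m → Sat m b := by
  constructor
  · intro h m hm; exact hm.2 b h
  · intro h
    by_contra hab
    classical
    have hprem : ∀ F : Finset (Form V),
        ↑F ⊆ insert (Form.neg b) {g | C a g} →
        ∃ u ∈ U, ∀ x ∈ F, Sat u x := by
      intro F hF
      by_contra hFsat
      push_neg at hFsat
      set L := (F.erase (Form.neg b)).toList with hLdef
      have hCL : C a (conjAll L) := by
        apply C_conjAll hC
        intro x hx
        have hx' : x ∈ F.erase (Form.neg b) := by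
          simpa [hLdef] using hx
        have hxF : x ∈ F := Finset.mem_of_mem_erase hx'
        have hxne : x ≠ Form.neg b := Finset.ne_of_mem_erase hx'
        rcases hF hxF with h1 | h2
        · exact absurd h1 hxne
        · exact h2
      have hval : Valid U (Form.impl (conjAll L) b) := by
        intro u hu hsat
        by_contra hb
        obtain ⟨x, hxF, hxns⟩ := hFsat u hu
        apply hxns
        by_cases hxe : x = Form.neg b
        · subst hxe; exact hb
        · exact sat_conjAll.1 hsat x
            (by simp [hLdef, Finset.mem_erase, hxe, hxF])
      exact hab (hC.2.2.1 (conjAll L) b a hval hCL)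
    obtain ⟨m, hmU, hmall⟩ := hcomp _ hprem
    have hnorm : NormalFor U C a m :=
      ⟨hmU, fun g hg => hmall g (Set.mem_insert_of_mem _ hg)⟩
    exact hmall _ (Set.mem_insert _ _) (h m hnorm)

/-- If `a` has no normal world then everything follows from `a`. -/
lemma incons_all (hcomp : Compactness U) (hC : Cumulative U C) {a : Form V}
    (h : ¬ ∃ m, NormalFor U C a m) (b : Form V) : C a b := by
  rw [normal_char hcomp hC]
  intro m hm
  exact absurd ⟨m, hm⟩ h

lemma transGen_chain {α : Type*} {R : α → α → Prop} {s t : α}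
    (h : Relation.TransGen R s t) :
    ∃ (n : ℕ) (δ : ℕ → α), 1 ≤ n ∧ δ 0 = s ∧ δ n = t ∧
      ∀ i < n, R (δ i) (δ (i + 1)) := by
  induction h with
  | @single b hb =>
      refine ⟨1, fun i => if i = 0 then s else b, le_refl 1, by simp, by simp, ?_⟩
      intro i hi
      interval_cases i
      simpa using hb
  | @tail b c _hab hbc ih =>
      obtain ⟨n, δ, hn, h0, hnt, hch⟩ := ih
      refine ⟨n + 1, fun i => if i ≤ n then δ i else c, by omega,
        by simp [h0], by simp, ?_⟩
      intro i hi
      by_cases hin : i < n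
      · simpa [Nat.le_of_lt hin, Nat.succ_le_of_lt hin] using hch i hin
      · have : i = n := by omega
        subst this
        simpa [hnt] using hbc

lemma loop_chain (hC : Cumulative U C) (hLoop : LoopRule C) (n : ℕ)
    (hn : 1 ≤ n) (γ : ℕ → Form V)
    (hchain : ∀ i < n, C (γ (i + 1)) (γ i)) (hcl : C (γ 0) (γ n)) :
    C (γ 0) (γ 1) := by
  set al : ℕ → Form V := fun i => if i = 0 then γ 0 else γ (n + 1 - i) with hal
  have key := hLoop n hn al ?_ ?_
  · have h0 : al 0 = γ 0 := by simp [hal]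
    have hnn : al n = γ 1 := by
      have : n ≠ 0 := by omega
      simp [hal, this, Nat.succ_sub (le_refl n), Nat.sub_self]
    rwa [h0, hnn] at key
  · intro i hi
    by_cases hi0 : i = 0
    · subst hi0
      have h1 : al 1 = γ n := by simp [hal]
      simpa [hal, h1] using hcl
    · have hi1 : i + 1 ≠ 0 := by omega
      have e1 : al i = γ (n + 1 - i) := by simp [hal, hi0]
      have e2 : al (i + 1) = γ (n - i) := by
        simp only [hal, if_neg hi1]
        congr 1
        omega
      rw [e1, e2]
      have : n + 1 - i = (n - i) + 1 := by omega
      rw [this]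
      exact hchain (n - i) (by omega)
  · have h0 : al 0 = γ 0 := by simp [hal]
    have hnn : al n = γ 1 := by
      have : n ≠ 0 := by omega
      simp [hal, this, Nat.succ_sub (le_refl n), Nat.sub_self]
    rw [h0, hnn]
    exact hchain 0 hn

/-- The key no-cycle lemma coming from the Loop rule. -/
lemma no_cycle (hC : Cumulative U C) (hLoop : LoopRule C) {s t a : Form V}
    (h : Relation.TransGen (fun x y => C y x ∧ ¬ C x y) s t)
    (hsa : C s a) (hat : C a t) : False := by
  obtain ⟨n, δ, hn, h0, hnt, hch⟩ := transGen_chain h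
  set γ : ℕ → Form V := fun i => if i ≤ n then δ i else a with hγ
  have key := loop_chain hC hLoop (n + 1) (by omega) γ ?_ ?_
  · have e0 : γ 0 = δ 0 := by simp [hγ]
    have e1 : γ 1 = δ 1 := by simp [hγ, hn]
    rw [e0, e1] at key
    exact (hch 0 hn).2 key
  · intro i hi
    by_cases hin : i < n
    · have e1 : γ (i + 1) = δ (i + 1) := by simp [hγ, Nat.succ_le_of_lt hin]
      have e2 : γ i = δ i := by simp [hγ, Nat.le_of_lt hin]
      rw [e1, e2]
      exact (hch i hin).1
    · have hieq : i = n := by omega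
      have e1 : γ (i + 1) = a := by
        show (if i + 1 ≤ n then δ (i + 1) else a) = a
        rw [if_neg (by omega)]
      have e2 : γ i = δ i := by
        show (if i ≤ n then δ i else a) = δ i
        rw [if_pos (by omega)]
      rw [e1, e2, hieq, hnt]
      exact hat
  · have e0 : γ 0 = δ 0 := by simp [hγ]
    have e1 : γ (n + 1) = a := by simp [hγ]
    rw [e0, e1, h0]
    exact hsa

end Aux

/-- Representation theorem for loop-cumulative relations: under
compactness, a consequence relation is loop-cumulative iff it is defined by some
cumulative ordered model. -/
theorem stmt10 {V : Type} (U : Set (World V)) (C : Form V → Form V → Prop)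
    (hcomp : Compactness U) :
    (Cumulative U C ∧ LoopRule C) ↔
      ∃ W : CumulModel V U,
        (∀ s, ¬ W.prec s s) ∧
        (∀ s t r, W.prec s t → W.prec t r → W.prec s r) ∧
        (∀ a b : Form V, C a b ↔ W.Cons a b) := by
  constructor
  · rintro ⟨hC, hLoop⟩
    classical
    have hnc : ∀ a b : Form V, C a b ↔ ∀ m, NormalFor U C a m → Sat m b :=
      normal_char hcomp hC
    have hEq : EquivRule C := aux_equiv hC
    set R : Form V → Form V → Prop := fun x y => C y x ∧ ¬ C x y with hR
    set T := {x : Form V // ∃ m, NormalFor U C x m} with hT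
    set R' : T → T → Prop := fun s t => Relation.TransGen R s.1 t.1 with hR'
    have hsat : ∀ (s : T) (a : Form V),
        (∀ u ∈ {m | NormalFor U C s.1 m}, Sat u a) ↔ C s.1 a :=
      fun s a => Iff.symm (hnc s.1 a)
    have hmin : ∀ (a : Form V) (t : T), C t.1 a → C a t.1 →
        MinimalIn R' {s : T | C s.1 a} t := by
      intro a t h1 h2
      refine ⟨h1, ?_⟩
      intro s hs hpre
      exact no_cycle hC hLoop hpre hs h2
    have hmin' : ∀ (a : Form V) (t : T),
        MinimalIn R' {s : T | C s.1 a} t → C a t.1 := by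
      intro a t hm
      obtain ⟨ht, hmt⟩ := hm
      by_contra hna
      have hcons : ∃ m, NormalFor U C a m := by
        by_contra hno
        exact hna (incons_all hcomp hC hno t.1)
      exact hmt ⟨a, hcons⟩ (hC.1 a) (Relation.TransGen.single ⟨ht, hna⟩)
    have hsmooth : ∀ a : Form V,
        Smooth R' {s : T | ∀ u ∈ {m | NormalFor U C s.1 m}, Sat u a} := by
      intro a t ht
      have ht' : C t.1 a := (hsat t a).1 ht
      by_cases hat : C a t.1
      · left
        have hm := hmin a t ht' hat
        exact ⟨ht, fun s hs => hm.2 s ((hsat s a).1 hs)⟩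
      · right
        have hcons : ∃ m, NormalFor U C a m := by
          by_contra hno
          exact hat (incons_all hcomp hC hno t.1)
        refine ⟨⟨a, hcons⟩, Relation.TransGen.single ⟨ht', hat⟩, ?_⟩
        have hm := hmin a ⟨a, hcons⟩ (hC.1 a) (hC.1 a)
        exact ⟨(hsat ⟨a, hcons⟩ a).2 (hC.1 a), fun s hs => hm.2 s ((hsat s a).1 hs)⟩
    refine ⟨{ S := T
              l := fun s => {m | NormalFor U C s.1 m}
              l_sub := fun s m hm => hm.1
              l_ne := fun s => s.2
              prec := R'
              smooth := hsmooth }, ?_, ?_, ?_⟩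
    · intro s hss
      exact no_cycle hC hLoop hss (hC.1 s.1) (hC.1 s.1)
    · intro s t r h1 h2
      exact Relation.TransGen.trans h1 h2
    · intro a b
      constructor
      · intro hab s hs
        have hsC : MinimalIn R' {t : T | C t.1 a} s :=
          ⟨(hsat s a).1 hs.1, fun t htc hp => hs.2 t ((hsat t a).2 htc) hp⟩
        exact (hsat s b).2 (hEq a s.1 b (hmin' a s hsC) hsC.1 hab)
      · intro hW
        by_cases hcons : ∃ m, NormalFor U C a m
        · have hm := hmin a ⟨a, hcons⟩ (hC.1 a) (hC.1 a)
          have hmS : MinimalIn R'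
              {t : T | ∀ u ∈ {m | NormalFor U C t.1 m}, Sat u a} ⟨a, hcons⟩ :=
            ⟨(hsat ⟨a, hcons⟩ a).2 (hC.1 a),
             fun t htt hp => hm.2 t ((hsat t a).1 htt) hp⟩
          exact (hsat ⟨a, hcons⟩ b).1 (hW ⟨a, hcons⟩ hmS)
        · exact incons_all hcomp hC hcons b
  · rintro ⟨W, hirr, htrans, hiff⟩
    constructor
    · refine ⟨?_, ?_, ?_, ?_, ?_⟩
      · -- Reflexivity
        intro a
        rw [hiff]
        intro s hs
        exact hs.1
      · -- LLE
        intro a b c hv hac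
        rw [hiff] at hac ⊢
        have he : {t : W.S | W.StateSat t a} = {t : W.S | W.StateSat t b} := by
          ext t
          constructor
          · intro h u hu
            exact (show Sat u a ↔ Sat u b from hv u (W.l_sub t hu)).1 (h u hu)
          · intro h u hu
            exact (show Sat u a ↔ Sat u b from hv u (W.l_sub t hu)).2 (h u hu)
        intro s hs
        rw [← he] at hs
        exact hac s hs
      · -- RW
        intro a b c hv hca
        rw [hiff] at hca ⊢
        intro s hs
        intro u hu
        exact (show Sat u a → Sat u b from hv u (W.l_sub s hu)) (hca s hs u hu)
      · -- Cut
        intro a b c h1 h2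
        rw [hiff] at h1 h2 ⊢
        intro s hs
        have hb : W.StateSat s b := h2 s hs
        have hsab : W.StateSat s (Form.conj a b) := fun u hu =>
          show Sat u a ∧ Sat u b from ⟨hs.1 u hu, hb u hu⟩
        refine h1 s ⟨hsab, ?_⟩
        intro t htt hp
        exact hs.2 t (fun u hu => (show Sat u a ∧ Sat u b from htt u hu).1) hp
      · -- CM
        intro a b c h1 h2
        rw [hiff] at h1 h2 ⊢
        intro s hs
        have hsa : W.StateSat s a := fun u hu =>
          (show Sat u a ∧ Sat u b from hs.1 u hu).1
        rcases W.smooth a s hsa with hminA | ⟨r, hr, hrmin⟩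
        · exact h2 s hminA
        · exfalso
          have hrb : W.StateSat r b := h1 r hrmin
          have : W.StateSat r (Form.conj a b) := fun u hu =>
            show Sat u a ∧ Sat u b from ⟨hrmin.1 u hu, hrb u hu⟩
          exact hs.2 r this hr
    · -- Loop
      intro k hk al hch hcl
      rw [hiff]
      intro t ht
      have main : ∀ i, i ≤ k → ∃ r, MinimalIn W.prec
          {s : W.S | W.StateSat s (al i)} r ∧ (r = t ∨ W.prec r t) := by
        intro i
        induction i with
        | zero => exact fun _ => ⟨t, ht, Or.inl rfl⟩
        | succ i ih =>
            intro hik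
            obtain ⟨r, hrmin, hrt⟩ := ih (by omega)
            have hri : W.StateSat r (al (i + 1)) :=
              ((hiff _ _).1 (hch i (by omega))) r hrmin
            rcases W.smooth (al (i + 1)) r hri with hmin1 | ⟨r', hr', hr'min⟩
            · exact ⟨r, hmin1, hrt⟩
            · refine ⟨r', hr'min, ?_⟩
              rcases hrt with rfl | hrt
              · exact Or.inr hr'
              · exact Or.inr (htrans _ _ _ hr' hrt)
      obtain ⟨r, hrmin, hrt⟩ := main k (le_refl k)
      have hr0 : W.StateSat r (al 0) := ((hiff _ _).1 hcl) r hrmin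
      rcases hrt with rfl | hrt
      · exact hrmin.1
      · exact absurd hrt (ht.2 r hr0)

end KLM
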